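/- arXiv:1610.01354 — 2 statements merged into one kernel-verified Lean document; each statement's English description precedes it below -/
import Mathlib

section
/- Let p be a prime, d a positive divisor of p − 1, ζ₀ a generator of (ZMod p)ˣ, and set d₂ = ⌈√d⌉. For every x ∈ (ZMod p)ˣ there exist integers j, u₂, v₂ with 1 ≤ j ≤ (p − 1)/d, 0 ≤ u₂ ≤ d₂, and 0 ≤ v₂ ≤ d₂ − 1, such that x^d = (ζ₀^d)^j and x = ζ₀^{((p−1)/d)·(u₂·d₂ − v₂) + j}. (This is the exponent decomposition underlying the DLP-to-DHP reduction algorithm with auxiliary group (ZMod p)ˣ.) -/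
/-!
Write `x = ζ₀ ^ a` and put `M = (p - 1) / d`. Since `ζ₀ ^ (d * M) = 1`, the exponent `a` only
matters modulo `d * M`, where it has a unique representative `M * k + j` with `1 ≤ j ≤ M` and
`0 ≤ k < d`; raising to the `d`-th power kills the `M * k` part. Finally `k < d ≤ d₂ ^ 2`, so
rounding `k` up to a multiple of `d₂` writes it as `u₂ * d₂ - v₂` with `u₂ ≤ d₂` and `v₂ < d₂`.
-/

theorem Int.exists_modEq_mul_add (a : ℤ) {d M : ℤ} (hd : 0 < d) (hM : 0 < M) :
    ∃ k j : ℤ, 0 ≤ k ∧ k < d ∧ 1 ≤ j ∧ j ≤ M ∧ a ≡ M * k + j [ZMOD d * M] := by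
  have hdM : 0 < d * M := mul_pos hd hM
  set r := (a - 1) % (d * M)
  have hr0 : 0 ≤ r := Int.emod_nonneg _ hdM.ne'
  have hr : r < d * M := Int.emod_lt_of_pos _ hdM
  refine ⟨r / M, r % M + 1, Int.ediv_nonneg hr0 hM.le, (Int.ediv_lt_iff_lt_mul hM).2 hr,
    by linarith [Int.emod_nonneg r hM.ne'], by linarith [Int.emod_lt_of_pos r hM], ?_⟩
  calc a = a - 1 + 1 := by ring
    _ ≡ r + 1 [ZMOD d * M] := ((Int.mod_modEq _ _).add_right 1).symm
    _ = M * (r / M) + (r % M + 1) := by rw [← add_assoc, Int.mul_ediv_add_emod]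

theorem Int.exists_eq_mul_sub_of_lt_mul_self {k m : ℤ} (hk : 0 ≤ k) (hkm : k < m * m)
    (hm : 0 ≤ m) : ∃ u v : ℤ, 0 ≤ u ∧ u ≤ m ∧ 0 ≤ v ∧ v ≤ m - 1 ∧ k = u * m - v := by
  have hm_pos : 0 < m := lt_of_le_of_ne hm (by rintro rfl; omega)
  have hv0 : 0 ≤ (-k) % m := Int.emod_nonneg _ hm_pos.ne'
  have hvm : (-k) % m < m := Int.emod_lt_of_pos _ hm_pos
  have hkuv : k = -((-k) / m) * m - (-k) % m := by linarith [Int.emod_add_mul_ediv (-k) m]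
  refine ⟨-((-k) / m), (-k) % m, ?_, ?_, hv0, by omega, hkuv⟩ <;> nlinarith

theorem Nat.le_ceil_sqrt_mul_self (n : ℕ) : n ≤ ⌈√(n : ℝ)⌉₊ * ⌈√(n : ℝ)⌉₊ := by
  have h := (Real.sqrt_le_iff.mp (Nat.le_ceil √(n : ℝ))).2
  rw [← sq]
  exact_mod_cast h

theorem zpow_mul_add_pow_eq {G : Type*} [Group G] {g : G} {d : ℕ} {M : ℤ}
    (h : (orderOf g : ℤ) ∣ d * M) (k j : ℤ) : (g ^ (M * k + j)) ^ d = (g ^ d) ^ j := by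
  rw [← zpow_natCast, ← zpow_natCast g d, ← zpow_mul, ← zpow_mul, zpow_eq_zpow_iff_modEq,
    Int.modEq_iff_dvd]
  exact h.trans ⟨-k, by ring⟩

theorem reduction_exponent_decomposition_general
    (p : ℕ) (hp : p.Prime) (ζ₀ : (ZMod p)ˣ)
    (hζ₀ : ∀ y : (ZMod p)ˣ, y ∈ Subgroup.zpowers ζ₀)
    (d : ℕ) (hdvd : d ∣ p - 1)
    (d₂ : ℕ) (hd₂ : d₂ = ⌈Real.sqrt d⌉₊) (x : (ZMod p)ˣ) :
    ∃ j u₂ v₂ : ℤ,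
      1 ≤ j ∧ j ≤ (((p - 1) / d : ℕ) : ℤ) ∧
      0 ≤ u₂ ∧ u₂ ≤ (d₂ : ℤ) ∧ 0 ≤ v₂ ∧ v₂ ≤ (d₂ : ℤ) - 1 ∧
      x ^ d = (ζ₀ ^ d) ^ j ∧
      x = ζ₀ ^ ((((p - 1) / d : ℕ) : ℤ) * (u₂ * d₂ - v₂) + j) := by
  have := Fact.mk hp
  have hp1 : 0 < p - 1 := Nat.sub_pos_of_lt hp.one_lt
  have hd : 0 < d := Nat.pos_of_dvd_of_pos hdvd hp1
  have hM : 0 < (p - 1) / d := Nat.div_pos (Nat.le_of_dvd hp1 hdvd) hd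
  have horder : (orderOf ζ₀ : ℤ) ∣ d * (((p - 1) / d : ℕ) : ℤ) := by
    rw [← Nat.cast_mul, Nat.mul_div_cancel' hdvd, ← ZMod.card_units p]
    exact Int.natCast_dvd_natCast.2 orderOf_dvd_card
  obtain ⟨a, rfl⟩ := Subgroup.mem_zpowers_iff.mp (hζ₀ x)
  obtain ⟨k, j, hk0, hkd, hj1, hjM, ha⟩ :=
    Int.exists_modEq_mul_add a (Int.natCast_pos.2 hd) (Int.natCast_pos.2 hM)
  have hk : k < d₂ * d₂ := hkd.trans_le (by subst hd₂; exact_mod_cast Nat.le_ceil_sqrt_mul_self d)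
  obtain ⟨u₂, v₂, hu0, hud, hv0, hvd, rfl⟩ :=
    Int.exists_eq_mul_sub_of_lt_mul_self hk0 hk (Int.natCast_nonneg d₂)
  rw [zpow_eq_zpow_iff_modEq.2 (ha.of_dvd horder)]
  exact ⟨j, u₂, v₂, hj1, hjM, hu0, hud, hv0, hvd, zpow_mul_add_pow_eq horder _ j, rfl⟩

/-- Exponent decomposition underlying the DLP-to-DHP reduction with auxiliary group
`(ZMod p)ˣ`: for a prime `p`, a generator `ζ₀` of `(ZMod p)ˣ`, a positive divisor `d`
of `p - 1`, and `d₂ = ⌈√d⌉`, every `x : (ZMod p)ˣ` admits integers `j, u₂, v₂` with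
`1 ≤ j ≤ (p - 1) / d`, `0 ≤ u₂ ≤ d₂`, `0 ≤ v₂ ≤ d₂ - 1`, such that `x ^ d = (ζ₀ ^ d) ^ j`
and `x = ζ₀ ^ (((p - 1) / d) * (u₂ * d₂ - v₂) + j)`. -/
theorem reduction_exponent_decomposition
    (p : ℕ) (hp : p.Prime) (ζ₀ : (ZMod p)ˣ)
    (hζ₀ : ∀ y : (ZMod p)ˣ, y ∈ Subgroup.zpowers ζ₀)
    (d : ℕ) (hd : 0 < d) (hdvd : d ∣ p - 1)
    (d₂ : ℕ) (hd₂ : d₂ = ⌈Real.sqrt d⌉₊) (x : (ZMod p)ˣ) :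
    ∃ j u₂ v₂ : ℤ,
      1 ≤ j ∧ j ≤ (((p - 1) / d : ℕ) : ℤ) ∧
      0 ≤ u₂ ∧ u₂ ≤ (d₂ : ℤ) ∧ 0 ≤ v₂ ∧ v₂ ≤ (d₂ : ℤ) - 1 ∧
      x ^ d = (ζ₀ ^ d) ^ j ∧
      x = ζ₀ ^ ((((p - 1) / d : ℕ) : ℤ) * (u₂ * d₂ - v₂) + j) :=
  reduction_exponent_decomposition_general p hp ζ₀ hζ₀ d hdvd d₂ hd₂ x
end

section
/- Let G be an additive cyclic group of prime order p generated by P, let x ∈ ZMod p be nonzero, let Q = x • P, let d be a positive divisor of p − 1, let ζ₀ be a generator of (ZMod p)ˣ, put ζ = ζ₀^d, d₁ = ⌈√((p−1)/d)⌉ and d₂ = ⌈√d⌉. Then: (i) there exist integers u₁, v₁ with 0 ≤ u₁ ≤ d₁ and 0 ≤ v₁ ≤ d₁ − 1 such that the explicit equation ζ^{v₁} • (x^d • P) = ζ^{d₁·u₁} • P holds in G; and (ii) setting j = u₁·d₁ − v₁, there exist integers u₂, v₂ with 0 ≤ u₂ ≤ d₂ and 0 ≤ v₂ ≤ d₂ −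 1 such that (ζ₀^{(p−1)/d})^{v₂} • Q = (ζ₀^{((p−1)/d)·d₂})^{u₂} • (ζ₀^{j} • P) holds in G, and moreover x = ζ₀^{((p−1)/d)·(u₂·d₂ − v₂) + j}. (This is the correctness of the two baby-step giant-step collision searches in the reduction: the matches found determine the discrete logarithm x of Q with respect to P.) -/
lemma bsgs_aux (D N : ℤ) (hD : 0 < D) (hN : 0 ≤ N) (hND : N < D * D) :
    ∃ u v : ℤ, 0 ≤ u ∧ u ≤ D ∧ 0 ≤ v ∧ v ≤ D - 1 ∧ N + v = D * u := by
  set a := N / D with ha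
  set b := N % D with hb
  have hdiv : D * a + b = N := Int.mul_ediv_add_emod N D
  have hb0 : 0 ≤ b := Int.emod_nonneg N hD.ne'
  have hbD : b < D := Int.emod_lt_of_pos N hD
  have haD : a < D := by
    have h1 : D * a < D * D := by omega
    exact lt_of_mul_lt_mul_left h1 hD.le
  have ha0 : 0 ≤ a := Int.ediv_nonneg hN hD.le
  rcases eq_or_ne b 0 with h | h
  · exact ⟨a, 0, ha0, by omega, le_refl 0, by omega, by omega⟩
  · refine ⟨a + 1, D - b, by omega, by omega, by omega, by omega, ?_⟩
    have : D * (a + 1) = D * a + D := by ring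
    omega

lemma ceil_sqrt_sq (n D : ℕ) (hD : D = ⌈Real.sqrt (n : ℝ)⌉₊) : (n : ℤ) ≤ (D : ℤ) * D := by
  have h1 : Real.sqrt n ≤ D := by rw [hD]; exact Nat.le_ceil _
  have h2 : (n : ℝ) ≤ (D : ℝ) * D := by
    calc (n : ℝ) = Real.sqrt n * Real.sqrt n := (Real.mul_self_sqrt (by positivity)).symm
      _ ≤ (D : ℝ) * D := mul_le_mul h1 h1 (Real.sqrt_nonneg _) (by positivity)
  exact_mod_cast h2

/-- Correctness of the two baby-step giant-step collision searches in the DLP-to-DHP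
reduction with auxiliary group `(ZMod p)ˣ`: with `Q = x • P`, `ζ = ζ₀ ^ d`,
`d₁ = ⌈√((p-1)/d)⌉` and `d₂ = ⌈√d⌉`, (i) there are `u₁, v₁` with `0 ≤ u₁ ≤ d₁`,
`0 ≤ v₁ ≤ d₁ - 1` satisfying the explicit equation
`ζ ^ v₁ • (x ^ d • P) = ζ ^ (d₁ * u₁) • P` in `G`; and (ii) setting `j = u₁ * d₁ - v₁`,
there are `u₂, v₂` with `0 ≤ u₂ ≤ d₂`, `0 ≤ v₂ ≤ d₂ - 1` satisfying
`(ζ₀ ^ ((p-1)/d)) ^ v₂ • Q = (ζ₀ ^ (((p-1)/d) * d₂)) ^ u₂ • (ζ₀ ^ j • P)` in `G`, and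
moreover `x = ζ₀ ^ (((p-1)/d) * (u₂ * d₂ - v₂) + j)`. -/
theorem bsgs_collisions_determine_discrete_log
    (p : ℕ) (hp : p.Prime) (G : Type*) [AddCommGroup G] [Module (ZMod p) G]
    (hcard : Nat.card G = p) (P : G) (hgen : ∀ g : G, ∃ y : ZMod p, g = y • P)
    (x : ZMod p) (hx : x ≠ 0) (Q : G) (hQ : Q = x • P)
    (d : ℕ) (hd : 0 < d) (hdvd : d ∣ p - 1)
    (ζ₀ : (ZMod p)ˣ) (hζ₀ : ∀ y : (ZMod p)ˣ, y ∈ Subgroup.zpowers ζ₀)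
    (ζ : (ZMod p)ˣ) (hζ : ζ = ζ₀ ^ d)
    (d₁ : ℕ) (hd₁ : d₁ = ⌈Real.sqrt (((p - 1) / d : ℕ) : ℝ)⌉₊)
    (d₂ : ℕ) (hd₂ : d₂ = ⌈Real.sqrt (d : ℝ)⌉₊) :
    ∃ u₁ v₁ : ℤ,
      0 ≤ u₁ ∧ u₁ ≤ (d₁ : ℤ) ∧ 0 ≤ v₁ ∧ v₁ ≤ (d₁ : ℤ) - 1 ∧
      ((ζ ^ v₁ : (ZMod p)ˣ) : ZMod p) • (x ^ d • P)
        = ((ζ ^ ((d₁ : ℤ) * u₁) : (ZMod p)ˣ) : ZMod p) • P ∧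
      ∃ u₂ v₂ : ℤ,
        0 ≤ u₂ ∧ u₂ ≤ (d₂ : ℤ) ∧ 0 ≤ v₂ ∧ v₂ ≤ (d₂ : ℤ) - 1 ∧
        (((ζ₀ ^ ((p - 1) / d)) ^ v₂ : (ZMod p)ˣ) : ZMod p) • Q
          = (((ζ₀ ^ ((((p - 1) / d : ℕ) : ℤ) * d₂)) ^ u₂ : (ZMod p)ˣ) : ZMod p) •
              (((ζ₀ ^ (u₁ * d₁ - v₁) : (ZMod p)ˣ) : ZMod p) • P) ∧
        x = ((ζ₀ ^ ((((p - 1) / d : ℕ) : ℤ) * (u₂ * d₂ - v₂) + (u₁ * d₁ - v₁))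
              : (ZMod p)ˣ) : ZMod p) := by
  haveI := Fact.mk hp
  have hp1 : 0 < p - 1 := by have := hp.two_le; omega
  set n₁ : ℕ := (p - 1) / d with hn₁
  have hdn : d * n₁ = p - 1 := Nat.mul_div_cancel' hdvd
  have hn₁pos : 0 < n₁ := Nat.div_pos (Nat.le_of_dvd hp1 hdvd) hd
  have hord : orderOf ζ₀ = p - 1 := by
    rw [orderOf_eq_card_of_forall_mem_zpowers hζ₀, Nat.card_eq_fintype_card, ZMod.card_units]
  -- x as a unit and its discrete log
  set xu : (ZMod p)ˣ := Units.mk0 x hx with hxu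
  obtain ⟨k, hk⟩ := Subgroup.mem_zpowers_iff.mp (hζ₀ xu)
  -- modular decompositions
  have hn₁Z : (0:ℤ) < (n₁ : ℤ) := by exact_mod_cast hn₁pos
  have hdZ : (0:ℤ) < (d : ℤ) := by exact_mod_cast hd
  set k' : ℤ := k % (n₁ : ℤ) with hk'
  have hkm : (n₁ : ℤ) * (k / (n₁:ℤ)) + k' = k := Int.mul_ediv_add_emod k n₁
  set m : ℤ := k / (n₁ : ℤ)
  have hk'0 : 0 ≤ k' := Int.emod_nonneg k hn₁Z.ne'
  have hk'lt : k' < n₁ := Int.emod_lt_of_pos k hn₁Z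
  set m' : ℤ := m % (d : ℤ) with hm'
  have hmq : (d : ℤ) * (m / (d:ℤ)) + m' = m := Int.mul_ediv_add_emod m d
  set q : ℤ := m / (d : ℤ)
  have hm'0 : 0 ≤ m' := Int.emod_nonneg m hdZ.ne'
  have hm'lt : m' < d := Int.emod_lt_of_pos m hdZ
  -- the two BSGS collisions
  have hsq₁ : (n₁ : ℤ) ≤ (d₁ : ℤ) * d₁ := ceil_sqrt_sq n₁ d₁ hd₁
  have hsq₂ : (d : ℤ) ≤ (d₂ : ℤ) * d₂ := ceil_sqrt_sq d d₂ hd₂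
  have hd₁pos : (0:ℤ) < (d₁ : ℤ) := by nlinarith
  have hd₂pos : (0:ℤ) < (d₂ : ℤ) := by nlinarith
  obtain ⟨u₁, v₁, hu₁0, hu₁le, hv₁0, hv₁le, hE1⟩ :=
    bsgs_aux d₁ k' hd₁pos hk'0 (by omega)
  obtain ⟨u₂, v₂, hu₂0, hu₂le, hv₂0, hv₂le, hE2⟩ :=
    bsgs_aux d₂ m' hd₂pos hm'0 (by omega)
  -- key exponent-congruence tool
  have hpnZ : (d : ℤ) * (n₁ : ℤ) = (p : ℤ) - 1 := by
    have h2 : ((p:ℤ) - 1) = ((p - 1 : ℕ) : ℤ) := by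
      have := hp.two_le; push_cast; omega
    rw [h2, ← hdn]; push_cast; ring
  have hzpow : ∀ A B : ℤ, ((p:ℤ) - 1) ∣ B - A → ζ₀ ^ A = ζ₀ ^ B := by
    intro A B hAB
    have h1 : ζ₀ ^ (B - A) = 1 := by
      refine orderOf_dvd_iff_zpow_eq_one.mp ?_
      rw [hord]
      have h3 : ((p - 1 : ℕ) : ℤ) = (p : ℤ) - 1 := by
        have := hp.two_le; push_cast; omega
      rw [h3]; exact hAB
    calc ζ₀ ^ A = ζ₀ ^ A * ζ₀ ^ (B - A) := by rw [h1, mul_one]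
      _ = ζ₀ ^ B := by rw [← zpow_add]; ring_nf
  refine ⟨u₁, v₁, hu₁0, hu₁le, hv₁0, hv₁le, ?_, u₂, v₂, hu₂0, hu₂le, hv₂0, hv₂le, ?_, ?_⟩
  · -- first collision in G
    have hunit : ζ ^ v₁ * xu ^ d = ζ ^ ((d₁ : ℤ) * u₁) := by
      rw [hζ, ← hk]
      simp only [← zpow_natCast, ← zpow_mul, ← zpow_add]
      refine hzpow _ _ ⟨-m, ?_⟩
      have hkk : k = (n₁ : ℤ) * m + k' := by linear_combination -hkm
      rw [hkk]
      linear_combination (-(d:ℤ)) * hE1 + (-m) * hpnZ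
    have hxd : x ^ d = ((xu ^ d : (ZMod p)ˣ) : ZMod p) := by
      rw [Units.val_pow_eq_pow_val]; rfl
    rw [smul_smul, hxd, ← Units.val_mul, hunit]
  · -- second collision in G
    have hunit : (ζ₀ ^ n₁) ^ v₂ * xu
        = (ζ₀ ^ ((n₁ : ℤ) * d₂)) ^ u₂ * ζ₀ ^ (u₁ * d₁ - v₁) := by
      rw [← hk]
      simp only [← zpow_natCast, ← zpow_mul, ← zpow_add]
      refine hzpow _ _ ⟨-q, ?_⟩
      have hkk : k = (n₁ : ℤ) * m + k' := by linear_combination -hkm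
      have hmm : m = (d : ℤ) * q + m' := by linear_combination -hmq
      have hj : u₁ * d₁ - v₁ = k' := by linear_combination -hE1
      rw [hkk, hmm, hj]
      linear_combination (-(n₁:ℤ)) * hE2 + (-q) * hpnZ
    rw [hQ, smul_smul, smul_smul]
    congr 1
    have hxv : x = (xu : ZMod p) := rfl
    rw [hxv, ← Units.val_mul, ← Units.val_mul, hunit]
  · -- recovering x
    have hunit : xu = ζ₀ ^ ((n₁ : ℤ) * (u₂ * d₂ - v₂) + (u₁ * d₁ - v₁)) := by
      rw [← hk]
      refine hzpow _ _ ⟨-q, ?_⟩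
      have hkk : k = (n₁ : ℤ) * m + k' := by linear_combination -hkm
      have hmm : m = (d : ℤ) * q + m' := by linear_combination -hmq
      have hj : u₁ * d₁ - v₁ = k' := by linear_combination -hE1
      rw [hkk, hmm, hj]
      linear_combination (-(n₁:ℤ)) * hE2 + (-q) * hpnZ
    calc x = (xu : ZMod p) := rfl
      _ = _ := by rw [hunit]
end
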